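/- arXiv:2208.01198 — 4 statements merged into one kernel-verified Lean document; each statement's English description precedes it below -/
import Mathlib

section
/- Let n, k, m be natural numbers with m ≥ 1 and k ≥ 1. For p = 1,…,m let H_p be a real n×k matrix with H_pᵀ H_p = I_k, let W_p be a real k×k matrix with W_pᵀ W_p = I_k, and let β ∈ ℝ^m satisfy β_p ≥ 0 for all p and Σ_{p=1}^m β_p² = 1. Set B = Σ_{p=1}^m β_p H_p W_p. Then for every real n×k matrix F with Fᵀ F = I_k, one has Tr(B Bᵀ) − Tr(Fᵀ B Bᵀ F) ≤ m² k − (1/k)·(Tr(Fᵀ B))². -/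
/-!
Everything is measured in the Frobenius norm, for which `Tr(Aᵀ A) = ‖A‖²`. Each `H_p W_p` has
orthonormal columns, so `‖H_p W_p‖ = √k`, and the triangle inequality with Cauchy–Schwarz on
`β` gives `Tr(B Bᵀ) = ‖B‖² ≤ (∑ |β_p|)² k ≤ m k ≤ m² k`. On the other side
`Tr(Fᵀ B Bᵀ F) = ‖Fᵀ B‖²`, and Cauchy–Schwarz on the diagonal of the `k × k` matrix `Fᵀ B` gives
`Tr(Fᵀ B)² ≤ k ‖Fᵀ B‖²`.
-/

open Matrix

attribute [local instance] Matrix.frobeniusNormedAddCommGroup Matrix.frobeniusNormedSpace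

theorem norm_sum_smul_sq_le {ι E : Type*} [Fintype ι] [SeminormedAddCommGroup E]
    [NormedSpace ℝ E] (β : ι → ℝ) (x : ι → E) {c : ℝ} (hx : ∀ p, ‖x p‖ ≤ c) :
    ‖∑ p, β p • x p‖ ^ 2 ≤ Fintype.card ι * (∑ p, β p ^ 2) * c ^ 2 := by
  have htriangle : ‖∑ p, β p • x p‖ ≤ (∑ p, |β p|) * c := by
    calc ‖∑ p, β p • x p‖ ≤ ∑ p, |β p| * ‖x p‖ := by
          simpa only [norm_smul, Real.norm_eq_abs] using norm_sum_le _ fun p ↦ β p • x p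
      _ ≤ ∑ p, |β p| * c := by gcongr with p; exact hx p
      _ = (∑ p, |β p|) * c := (Finset.sum_mul ..).symm
  have hcs : (∑ p, |β p|) ^ 2 ≤ Fintype.card ι * ∑ p, β p ^ 2 := by
    simpa only [sq_abs, Finset.card_univ] using
      sq_sum_le_card_mul_sum_sq (s := Finset.univ) (f := fun p ↦ |β p|)
  calc ‖∑ p, β p • x p‖ ^ 2 ≤ ((∑ p, |β p|) * c) ^ 2 := by gcongr
    _ = (∑ p, |β p|) ^ 2 * c ^ 2 := mul_pow ..
    _ ≤ Fintype.card ι * (∑ p, β p ^ 2) * c ^ 2 := by gcongr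

namespace Matrix

variable {ι m n : Type*} [Fintype ι] [Fintype m] [Fintype n]

theorem frobenius_norm_sq (A : Matrix m n ℝ) : ‖A‖ ^ 2 = ∑ i, ∑ j, A i j ^ 2 := by
  rw [frobenius_norm_def, ← Real.sqrt_eq_rpow, Real.sq_sqrt (by positivity)]
  simp only [Real.rpow_two, Real.norm_eq_abs, sq_abs]

theorem frobenius_norm_sq_eq_trace_transpose_mul (A : Matrix m n ℝ) :
    ‖A‖ ^ 2 = (Aᵀ * A).trace := by
  rw [frobenius_norm_sq, Finset.sum_comm]
  simp only [trace, diag, mul_apply, transpose_apply, sq]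

theorem frobenius_norm_sq_of_transpose_mul_self_eq_one [DecidableEq n] {Q : Matrix m n ℝ}
    (hQ : Qᵀ * Q = 1) : ‖Q‖ ^ 2 = Fintype.card n := by
  rw [frobenius_norm_sq_eq_trace_transpose_mul, hQ, trace_one]

theorem trace_sq_le_card_mul_frobenius_norm_sq (M : Matrix ι ι ℝ) :
    M.trace ^ 2 ≤ Fintype.card ι * ‖M‖ ^ 2 := by
  have hdiag : ∑ i, M i i ^ 2 ≤ ‖M‖ ^ 2 := by
    rw [frobenius_norm_sq]
    gcongr with i
    exact Finset.single_le_sum (f := fun j ↦ M i j ^ 2) (fun j _ ↦ sq_nonneg _) (Finset.mem_univ i)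
  calc M.trace ^ 2 ≤ Fintype.card ι * ∑ i, M i i ^ 2 :=
        sq_sum_le_card_mul_sum_sq (s := Finset.univ) (f := fun i ↦ M i i)
    _ ≤ Fintype.card ι * ‖M‖ ^ 2 := by gcongr

theorem transpose_mul_self_eq_one_mul {o R : Type*} [DecidableEq n] [DecidableEq o]
    [CommSemiring R] {H : Matrix m n R} {W : Matrix n o R} (hH : Hᵀ * H = 1) (hW : Wᵀ * W = 1) :
    (H * W)ᵀ * (H * W) = 1 := by
  rw [transpose_mul, Matrix.mul_assoc, ← Matrix.mul_assoc Hᵀ, hH, Matrix.one_mul, hW]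

end Matrix

theorem kmeans_loss_upper_bound_general
    (n k m : ℕ)
    (H : Fin m → Matrix (Fin n) (Fin k) ℝ)
    (hH : ∀ p, (H p)ᵀ * H p = 1)
    (W : Fin m → Matrix (Fin k) (Fin k) ℝ)
    (hW : ∀ p, (W p)ᵀ * W p = 1)
    (β : Fin m → ℝ) (hβnorm : ∑ p, (β p) ^ 2 = 1)
    (B : Matrix (Fin n) (Fin k) ℝ) (hB : B = ∑ p, β p • (H p * W p))
    (F : Matrix (Fin n) (Fin k) ℝ) :
    Matrix.trace (B * Bᵀ) - Matrix.trace (Fᵀ * B * Bᵀ * F)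
      ≤ (m : ℝ) ^ 2 * k - (1 / (k : ℝ)) * (Matrix.trace (Fᵀ * B)) ^ 2 := by
  have hnormB : ‖B‖ ^ 2 ≤ m * k := by
    have hQ p : ‖H p * W p‖ ≤ √k := by
      rw [← Real.sqrt_sq (norm_nonneg _), frobenius_norm_sq_of_transpose_mul_self_eq_one
        (transpose_mul_self_eq_one_mul (hH p) (hW p)), Fintype.card_fin]
    simpa [hB, hβnorm] using norm_sum_smul_sq_le β (fun p ↦ H p * W p) hQ
  have htrace : (Fᵀ * B).trace ^ 2 ≤ k * ‖Fᵀ * B‖ ^ 2 := by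
    simpa using trace_sq_le_card_mul_frobenius_norm_sq (Fᵀ * B)
  have hBB : (B * Bᵀ).trace = ‖B‖ ^ 2 := by
    rw [trace_mul_comm, frobenius_norm_sq_eq_trace_transpose_mul]
  have hFBBF : (Fᵀ * B * Bᵀ * F).trace = ‖Fᵀ * B‖ ^ 2 := by
    rw [← frobenius_norm_transpose, frobenius_norm_sq_eq_trace_transpose_mul]
    simp only [transpose_mul, transpose_transpose, Matrix.mul_assoc]
  have hm2 : (m : ℝ) * k ≤ m ^ 2 * k := by gcongr; exact_mod_cast Nat.le_self_pow two_ne_zero m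
  have hdiv : 1 / (k : ℝ) * (Fᵀ * B).trace ^ 2 ≤ ‖Fᵀ * B‖ ^ 2 := by
    rw [one_div_mul_eq_div]
    exact div_le_of_le_mul₀ k.cast_nonneg (by positivity) (by linarith)
  rw [hBB, hFBBF]
  linarith

/-- The upper-bound chain in the proof of Theorem 1:
`Tr(B Bᵀ) − Tr(Fᵀ B Bᵀ F) ≤ m² k − (1/k)·(Tr(Fᵀ B))²`. -/
theorem kmeans_loss_upper_bound
    (n k m : ℕ) (hm : 1 ≤ m) (hk : 1 ≤ k)
    (H : Fin m → Matrix (Fin n) (Fin k) ℝ)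
    (hH : ∀ p, (H p)ᵀ * H p = 1)
    (W : Fin m → Matrix (Fin k) (Fin k) ℝ)
    (hW : ∀ p, (W p)ᵀ * W p = 1)
    (β : Fin m → ℝ) (hβ : ∀ p, 0 ≤ β p) (hβnorm : ∑ p, (β p) ^ 2 = 1)
    (B : Matrix (Fin n) (Fin k) ℝ) (hB : B = ∑ p, β p • (H p * W p))
    (F : Matrix (Fin n) (Fin k) ℝ) (hF : Fᵀ * F = 1) :
    Matrix.trace (B * Bᵀ) - Matrix.trace (Fᵀ * B * Bᵀ * F)
      ≤ (m : ℝ) ^ 2 * k - (1 / (k : ℝ)) * (Matrix.trace (Fᵀ * B)) ^ 2 :=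
  kmeans_loss_upper_bound_general n k m H hH W hW β hβnorm B hB F
end

section
/- Let n, k be natural numbers, let U be a real n×k matrix, and let F be a real n×k matrix with Fᵀ F = I_k. Then Tr(Fᵀ U) ≤ Tr((Uᵀ U)^{1/2}), where (Uᵀ U)^{1/2} denotes the positive semidefinite square root of the positive semidefinite matrix Uᵀ U. (The right-hand side equals the sum of the singular values of U.) -/
open Matrix

/-- Orthogonal Procrustes upper bound (Theorem 2, upper bound part):
if `Fᵀ F = I` and `S` is the positive semidefinite square root of `Uᵀ U`,
then `Tr(Fᵀ U) ≤ Tr S`. -/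
theorem trace_orth_mul_le_trace_sqrt
    (n k : ℕ) (U F : Matrix (Fin n) (Fin k) ℝ) (hF : Fᵀ * F = 1)
    (S : Matrix (Fin k) (Fin k) ℝ) (hS : S.PosSemidef) (hSsq : S * S = Uᵀ * U) :
    Matrix.trace (Fᵀ * U) ≤ Matrix.trace S := by
  have hH := hS.1
  set Q : Matrix (Fin k) (Fin k) ℝ := (hH.eigenvectorUnitary : Matrix (Fin k) (Fin k) ℝ) with hQdef
  have hQ : Qᵀ * Q = 1 := by
    have := (Matrix.mem_unitaryGroup_iff').mp hH.eigenvectorUnitary.2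
    simpa [star_eq_conjTranspose, conjTranspose_eq_transpose_of_trivial] using this
  have hQQ : Q * Qᵀ = 1 := by
    have := (Matrix.mem_unitaryGroup_iff).mp hH.eigenvectorUnitary.2
    simpa [star_eq_conjTranspose, conjTranspose_eq_transpose_of_trivial] using this
  set d : Fin k → ℝ := hH.eigenvalues with hd
  have hspec : S = Q * diagonal d * Qᵀ := by
    have := hH.spectral_theorem
    simpa [star_eq_conjTranspose, conjTranspose_eq_transpose_of_trivial, Function.comp]
      using this
  have hdnn : ∀ i, 0 ≤ d i := fun i => hS.eigenvalues_nonneg i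
  set G : Matrix (Fin n) (Fin k) ℝ := F * Q with hG
  set V : Matrix (Fin n) (Fin k) ℝ := U * Q with hV
  have hGG : Gᵀ * G = 1 := by
    rw [hG, transpose_mul, Matrix.mul_assoc, ← Matrix.mul_assoc Fᵀ, hF, Matrix.one_mul, hQ]
  have hVV : Vᵀ * V = diagonal (fun i => d i ^ 2) := by
    rw [hV, transpose_mul, Matrix.mul_assoc, ← Matrix.mul_assoc Uᵀ, ← hSsq, hspec]
    calc Qᵀ * ((Q * diagonal d * Qᵀ) * (Q * diagonal d * Qᵀ) * Q)
        = (Qᵀ * Q) * diagonal d * (Qᵀ * Q) * diagonal d * (Qᵀ * Q) := by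
          simp only [Matrix.mul_assoc]
      _ = diagonal d * diagonal d := by rw [hQ]; simp
      _ = diagonal (fun i => d i ^ 2) := by
          rw [diagonal_mul_diagonal]; simp [pow_two]
  have htr : Matrix.trace (Fᵀ * U) = Matrix.trace (Gᵀ * V) := by
    rw [hG, hV, transpose_mul, Matrix.mul_assoc]
    rw [show Qᵀ * (Fᵀ * (U * Q)) = Qᵀ * (Fᵀ * U) * Q by simp [Matrix.mul_assoc]]
    rw [Matrix.trace_mul_cycle, ← Matrix.mul_assoc, hQQ, Matrix.one_mul]
  have htrS : Matrix.trace S = ∑ i, d i := by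
    rw [hspec, Matrix.trace_mul_cycle, hQ, Matrix.one_mul, trace_diagonal]
  rw [htr, htrS, Matrix.trace]
  apply Finset.sum_le_sum
  intro i _
  have hGi : ∑ j, G j i ^ 2 = 1 := by
    have := congrArg (fun M => M i i) hGG
    simpa [Matrix.mul_apply, Matrix.one_apply, pow_two] using this
  have hVi : ∑ j, V j i ^ 2 = d i ^ 2 := by
    have := congrArg (fun M => M i i) hVV
    simpa [Matrix.mul_apply, pow_two] using this
  have hcs := Finset.sum_mul_sq_le_sq_mul_sq Finset.univ (fun j => G j i) (fun j => V j i)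
  rw [hGi, hVi, one_mul] at hcs
  have hdiag : (Gᵀ * V).diag i = ∑ j, G j i * V j i := by
    simp [Matrix.diag, Matrix.mul_apply]
  rw [hdiag]
  calc ∑ j, G j i * V j i ≤ |∑ j, G j i * V j i| := le_abs_self _
    _ = Real.sqrt ((∑ j, G j i * V j i) ^ 2) := (Real.sqrt_sq_eq_abs _).symm
    _ ≤ Real.sqrt (d i ^ 2) := Real.sqrt_le_sqrt hcs
    _ = d i := Real.sqrt_sq (hdnn i)
end

section
/- Let n, k be natural numbers with k ≤ n and let U be a real n×k matrix. Then there exists a real n×k matrix F with Fᵀ F = I_k such that Tr(Fᵀ U) = Tr((Uᵀ U)^{1/2}), where (Uᵀ U)^{1/2} denotes the positive semidefinite square root of Uᵀ U. -/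
/-!
Polar decomposition. Diagonalise `S = Q D Qᴴ` with `Q` unitary and `D ≥ 0`. The columns of
`U Q` are pairwise orthogonal, with norms the eigenvalues of `S`, because `(U Q)ᴴ (U Q) = D²`;
as `k ≤ n`, they can be written as `U Q = E D` with `E` having orthonormal columns. Then
`U = F S` for `F = E Qᴴ`, which has orthonormal columns, and `Tr(Fᵀ U) = Tr(Fᵀ F S) = Tr S`.
-/

open Matrix
open scoped ComplexOrder

theorem exists_orthonormal_smul_eq_of_pairwise_inner_eq_zero {𝕜 E ι : Type*} [RCLike 𝕜]
    [NormedAddCommGroup E] [InnerProductSpace 𝕜 E] [FiniteDimensional 𝕜 E] [Fintype ι]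
    (hι : Fintype.card ι ≤ Module.finrank 𝕜 E) {f : ι → E}
    (hf : Pairwise fun i j => inner 𝕜 (f i) (f j) = 0) :
    ∃ v : ι → E, Orthonormal 𝕜 v ∧ ∀ i, f i = (‖f i‖ : 𝕜) • v i := by
  -- Pad `f` with zeros to `finrank 𝕜 E` vectors; Gram–Schmidt then normalises each nonzero `f i`.
  obtain ⟨e⟩ := Function.Embedding.nonempty_of_card_le
    (β := Fin (Module.finrank 𝕜 E)) (by simpa using hι)
  set g : Fin (Module.finrank 𝕜 E) → E := Function.extend e f 0
  have hge : ∀ i, g (e i) = f i := e.injective.extend_apply f 0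
  have hg : Pairwise fun a b => inner 𝕜 (g a) (g b) = 0 := by
    intro a b hab
    by_cases ha : ∃ i, e i = a
    · by_cases hb : ∃ j, e j = b
      · obtain ⟨i, rfl⟩ := ha
        obtain ⟨j, rfl⟩ := hb
        rw [hge, hge]
        exact hf (ne_of_apply_ne e hab)
      · simp [g, Function.extend_apply' _ _ _ hb]
    · simp [g, Function.extend_apply' _ _ _ ha]
  set b := InnerProductSpace.gramSchmidtOrthonormalBasis (Fintype.card_fin _).symm g
  refine ⟨b ∘ e, b.orthonormal.comp e e.injective, fun i => ?_⟩
  by_cases hi : f i = 0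
  · simp [hi]
  · rw [Function.comp_apply,
      InnerProductSpace.gramSchmidtOrthonormalBasis_apply_of_orthogonal _ hg (by rwa [hge]),
      hge, smul_smul, mul_inv_cancel₀ (by simpa using hi), one_smul]

namespace Matrix

variable {𝕜 m ι : Type*} [RCLike 𝕜] [Fintype m]

theorem conjTranspose_mul_apply_eq_inner (A B : Matrix m ι 𝕜) (i j : ι) :
    (Aᴴ * B) i j = inner 𝕜 (WithLp.toLp 2 (Aᵀ i)) (WithLp.toLp 2 (Bᵀ j)) := by
  simp [mul_apply, EuclideanSpace.inner_toLp_toLp, dotProduct, mul_comm]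

variable [Fintype ι] [DecidableEq ι]

theorem exists_conjTranspose_mul_self_eq_one_and_mul_diagonal_eq
    (hι : Fintype.card ι ≤ Fintype.card m) {W : Matrix m ι 𝕜} {d : ι → ℝ} (hd : ∀ i, 0 ≤ d i)
    (hW : Wᴴ * W = diagonal fun i => (d i : 𝕜) ^ 2) :
    ∃ E : Matrix m ι 𝕜, Eᴴ * E = 1 ∧ E * diagonal (fun i => (d i : 𝕜)) = W := by
  set c : ι → EuclideanSpace 𝕜 m := fun j => WithLp.toLp 2 (Wᵀ j)
  have hc : ∀ i j, inner 𝕜 (c i) (c j) = diagonal (fun i => (d i : 𝕜) ^ 2) i j := by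
    intro i j
    rw [← hW, conjTranspose_mul_apply_eq_inner]
  have hc_norm : ∀ j, ‖c j‖ = d j := by
    intro j
    have := hc j j
    rw [inner_self_eq_norm_sq_to_K, diagonal_apply_eq] at this
    exact (pow_left_inj₀ (norm_nonneg _) (hd j) two_ne_zero).mp (by exact_mod_cast this)
  obtain ⟨v, hv, hcv⟩ := exists_orthonormal_smul_eq_of_pairwise_inner_eq_zero
    (by rwa [finrank_euclideanSpace]) fun i j hij => (hc i j).trans (diagonal_apply_ne _ hij)
  refine ⟨of fun a j => v j a, ?_, ?_⟩
  · ext i j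
    rw [conjTranspose_mul_apply_eq_inner]
    exact (orthonormal_iff_ite.mp hv i j).trans one_apply.symm
  · ext a j
    have := congrArg (fun x => x a) (hcv j)
    simp only [hc_norm] at this
    simpa [c, mul_comm, RCLike.real_smul_eq_coe_mul] using this.symm

theorem PosSemidef.exists_conjTranspose_mul_self_eq_one_and_mul_eq
    (hι : Fintype.card ι ≤ Fintype.card m) {U : Matrix m ι 𝕜} {S : Matrix ι ι 𝕜}
    (hS : S.PosSemidef) (hSU : S * S = Uᴴ * U) :
    ∃ F : Matrix m ι 𝕜, Fᴴ * F = 1 ∧ F * S = U := by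
  set Q : Matrix ι ι 𝕜 := (hS.1.eigenvectorUnitary : Matrix ι ι 𝕜)
  set D : Matrix ι ι 𝕜 := diagonal (RCLike.ofReal ∘ hS.1.eigenvalues)
  have hQ : star Q * Q = 1 := Unitary.coe_star_mul_self hS.1.eigenvectorUnitary
  have hQ' : Q * star Q = 1 := Unitary.coe_mul_star_self hS.1.eigenvectorUnitary
  have hcancel : ∀ X : Matrix ι ι 𝕜, star Q * (Q * X) = X := fun X => by
    rw [← Matrix.mul_assoc, hQ, Matrix.one_mul]
  have hSQ : S = Q * D * star Q := by
    simpa [Unitary.conjStarAlgAut_apply] using hS.1.spectral_theorem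
  have hW : (U * Q)ᴴ * (U * Q) = diagonal fun i => ((hS.1.eigenvalues i : ℝ) : 𝕜) ^ 2 :=
    calc (U * Q)ᴴ * (U * Q) = star Q * (S * S) * Q := by
          rw [hSU, conjTranspose_mul, star_eq_conjTranspose]
          simp only [Matrix.mul_assoc]
      _ = D * D := by
          rw [hSQ]
          simp only [Matrix.mul_assoc, hcancel, hQ, Matrix.mul_one]
      _ = _ := by simp [D, diagonal_mul_diagonal, sq]
  obtain ⟨E, hE, hED⟩ := exists_conjTranspose_mul_self_eq_one_and_mul_diagonal_eq hι
    hS.eigenvalues_nonneg hW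
  refine ⟨E * star Q, ?_, ?_⟩
  · rw [conjTranspose_mul, ← star_eq_conjTranspose, star_star, Matrix.mul_assoc,
      ← Matrix.mul_assoc Eᴴ, hE, Matrix.one_mul, hQ']
  · calc E * star Q * S = E * D * star Q := by
          rw [hSQ]
          simp only [Matrix.mul_assoc, hcancel]
      _ = U * Q * star Q := congrArg (· * star Q) hED
      _ = U := by rw [Matrix.mul_assoc, hQ', Matrix.mul_one]

end Matrix

/-- Orthogonal Procrustes achievability (Theorem 2, attainment part):
if `k ≤ n` and `S` is the positive semidefinite square root of `Uᵀ U`,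
there exists `F` with orthonormal columns such that `Tr(Fᵀ U) = Tr S`. -/
theorem exists_orth_trace_eq_trace_sqrt
    (n k : ℕ) (hkn : k ≤ n) (U : Matrix (Fin n) (Fin k) ℝ)
    (S : Matrix (Fin k) (Fin k) ℝ) (hS : S.PosSemidef) (hSsq : S * S = Uᵀ * U) :
    ∃ F : Matrix (Fin n) (Fin k) ℝ, Fᵀ * F = 1 ∧
      Matrix.trace (Fᵀ * U) = Matrix.trace S := by
  obtain ⟨F, hF, rfl⟩ := PosSemidef.exists_conjTranspose_mul_self_eq_one_and_mul_eq
    (U := U) (by simpa using hkn) hS (by rwa [conjTranspose_eq_transpose_of_trivial])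
  rw [conjTranspose_eq_transpose_of_trivial] at hF
  exact ⟨F, hF, by rw [← Matrix.mul_assoc, hF, Matrix.one_mul]⟩
end

section
/- Let n, k be natural numbers and let B be a real n×k matrix. Suppose F₀ is a real n×k matrix with F₀ᵀ F₀ = I_k that maximizes the linear alignment objective, i.e., Tr(Fᵀ B) ≤ Tr(F₀ᵀ B) for every real n×k matrix F with Fᵀ F = I_k. Then F₀ also maximizes the quadratic objective: Tr(Fᵀ B Bᵀ F) ≤ Tr(F₀ᵀ B Bᵀ F₀) for every real n×k matrix F with Fᵀ F = I_k. -/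
/-!
A maximizer `F₀` of `Tr(Fᵀ B)` has every column of `B` in its column space. Otherwise some column
`b` of `B` has a nonzero component `g` orthogonal to that space, and replacing the matching column
`f` of `F₀` by `(a f + g) / √(a² + ‖g‖²)`, where `a = ⟪f, b⟫`, keeps the columns orthonormal and
raises that column's contribution to the trace from `a` to `√(a² + ‖g‖²) > a`.
So `F₀ F₀ᵀ B = B` and `Tr(F₀ᵀ B Bᵀ F₀) = ‖B‖²`, whereas for any `F` with orthonormal columns
`Tr(Fᵀ B Bᵀ F) = ‖B‖² - ‖B - F Fᵀ B‖² ≤ ‖B‖²` (Frobenius norms).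
-/

open Matrix

namespace Matrix

variable {m n : Type*} [Fintype m] [Fintype n] [DecidableEq n]

omit [Fintype m] [Fintype n] in
lemma transpose_updateCol_apply (F : Matrix m n ℝ) (j : n) (v : m → ℝ) (p : n) :
    (updateCol F j v)ᵀ p = if p = j then v else Fᵀ p := by
  ext i
  split_ifs with h <;> simp [h]

omit [Fintype n] in
lemma transpose_mul_self_updateCol_eq_one {F : Matrix m n ℝ} (hF : Fᵀ * F = 1) {j : n}
    {v : m → ℝ} (hv : v ⬝ᵥ v = 1) (hFv : ∀ p ≠ j, Fᵀ p ⬝ᵥ v = 0) :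
    (updateCol F j v)ᵀ * updateCol F j v = 1 := by
  ext p q
  change (updateCol F j v)ᵀ p ⬝ᵥ (updateCol F j v)ᵀ q = (1 : Matrix n n ℝ) p q
  rw [transpose_updateCol_apply, transpose_updateCol_apply, one_apply]
  by_cases hp : p = j <;> by_cases hq : q = j
  · simp [hp, hq, hv]
  · simp [hp, hq, dotProduct_comm v, hFv q hq, Ne.symm hq]
  · simp [hp, hq, hFv p hp]
  · simp only [hp, hq, if_false, ← one_apply]
    exact congrFun (congrFun hF p) q

omit [DecidableEq n] in
lemma trace_transpose_mul_eq_sum_dotProduct (F B : Matrix m n ℝ) :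
    trace (Fᵀ * B) = ∑ p, Fᵀ p ⬝ᵥ Bᵀ p := rfl

lemma trace_transpose_updateCol_mul (F B : Matrix m n ℝ) (j : n) (v : m → ℝ) :
    trace ((updateCol F j v)ᵀ * B) = trace (Fᵀ * B) - Fᵀ j ⬝ᵥ Bᵀ j + v ⬝ᵥ Bᵀ j := by
  simp only [trace_transpose_mul_eq_sum_dotProduct, transpose_updateCol_apply]
  rw [← Finset.add_sum_erase _ _ (Finset.mem_univ j),
    ← Finset.add_sum_erase _ (fun p => Fᵀ p ⬝ᵥ Bᵀ p) (Finset.mem_univ j),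
    Finset.sum_congr rfl fun p hp => by rw [if_neg (Finset.ne_of_mem_erase hp)]]
  rw [if_pos rfl]
  ring

lemma exists_trace_transpose_mul_gt {F : Matrix m n ℝ} (hF : Fᵀ * F = 1) (B : Matrix m n ℝ)
    (j : n) {g : m → ℝ} (hFg : Fᵀ *ᵥ g = 0) (hgB : g ⬝ᵥ Bᵀ j = g ⬝ᵥ g) (hg : g ≠ 0) :
    ∃ F' : Matrix m n ℝ, F'ᵀ * F' = 1 ∧ trace (Fᵀ * B) < trace (F'ᵀ * B) := by
  set a := Fᵀ j ⬝ᵥ Bᵀ j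
  set c := g ⬝ᵥ g
  have hc : 0 < c :=
    (dotProduct_self_star_nonneg g).lt_of_ne (Ne.symm (dotProduct_self_eq_zero.not.mpr hg))
  set r := √(a ^ 2 + c)
  have hr : 0 < r := Real.sqrt_pos.mpr (by positivity)
  have hr2 : r ^ 2 = a ^ 2 + c := Real.sq_sqrt (by positivity)
  have hFF : ∀ p q, Fᵀ p ⬝ᵥ Fᵀ q = (1 : Matrix n n ℝ) p q := fun p q =>
    congrFun (congrFun hF p) q
  have hFg_apply : ∀ p, Fᵀ p ⬝ᵥ g = 0 := congrFun hFg
  set v := r⁻¹ • (a • Fᵀ j + g)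
  have hv : v ⬝ᵥ v = 1 := by
    simp only [v, smul_dotProduct, dotProduct_smul, add_dotProduct, dotProduct_add, hFF,
      one_apply_eq, hFg_apply, dotProduct_comm g, smul_eq_mul]
    field_simp
    linear_combination -hr2
  have hFv : ∀ p ≠ j, Fᵀ p ⬝ᵥ v = 0 := by
    intro p hp
    simp [v, hFF, hFg_apply, one_apply_ne hp]
  have hvB : v ⬝ᵥ Bᵀ j = r := by
    simp only [v, smul_dotProduct, add_dotProduct, hgB, smul_eq_mul]
    field_simp
    linear_combination -hr2
  refine ⟨updateCol F j v, transpose_mul_self_updateCol_eq_one hF hv hFv, ?_⟩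
  rw [trace_transpose_updateCol_mul, hvB]
  have har : a < r := (le_abs_self a).trans_lt (Real.lt_sqrt_of_sq_lt (by rw [sq_abs]; linarith))
  linarith

omit [DecidableEq n] in
lemma trace_transpose_mul_mul_transpose_mul (F B : Matrix m n ℝ) :
    trace (Fᵀ * B * Bᵀ * F) = trace (Bᵀ * (F * (Fᵀ * B))) := by
  rw [Matrix.mul_assoc (Fᵀ * B), trace_mul_comm, Matrix.mul_assoc]

lemma transpose_mul_sub_mul_transpose_mul_eq_zero {F : Matrix m n ℝ} (hF : Fᵀ * F = 1)
    (B : Matrix m n ℝ) : Fᵀ * (B - F * (Fᵀ * B)) = 0 := by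
  rw [Matrix.mul_sub, ← Matrix.mul_assoc, hF, Matrix.one_mul, sub_self]

lemma transpose_sub_mul_transpose_mul_mul_eq {F : Matrix m n ℝ} (hF : Fᵀ * F = 1)
    (B : Matrix m n ℝ) :
    (B - F * (Fᵀ * B))ᵀ * B = (B - F * (Fᵀ * B))ᵀ * (B - F * (Fᵀ * B)) := by
  have h : (B - F * (Fᵀ * B))ᵀ * F = 0 := by
    rw [← transpose_transpose ((B - F * (Fᵀ * B))ᵀ * F), transpose_mul, transpose_transpose,
      transpose_mul_sub_mul_transpose_mul_eq_zero hF, transpose_zero]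
  rw [Matrix.mul_sub (B - F * (Fᵀ * B))ᵀ, ← Matrix.mul_assoc (B - F * (Fᵀ * B))ᵀ F, h,
    Matrix.zero_mul, sub_zero]

lemma trace_transpose_mul_mul_transpose_mul_le {F : Matrix m n ℝ} (hF : Fᵀ * F = 1)
    (B : Matrix m n ℝ) : trace (Fᵀ * B * Bᵀ * F) ≤ trace (Bᵀ * B) := by
  set R := B - F * (Fᵀ * B)
  have hR : 0 ≤ trace (Rᵀ * R) := by
    simpa using (posSemidef_conjTranspose_mul_self R).trace_nonneg
  have hBR : trace (Bᵀ * B) - trace (Bᵀ * (F * (Fᵀ * B))) = trace (Rᵀ * R) := by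
    rw [← transpose_sub_mul_transpose_mul_mul_eq hF, ← trace_transpose (Rᵀ * B), transpose_mul,
      transpose_transpose, ← trace_sub, ← Matrix.mul_sub]
  rw [trace_transpose_mul_mul_transpose_mul]
  linarith

theorem mul_transpose_mul_eq_self_of_forall_trace_le {F₀ B : Matrix m n ℝ} (hF₀ : F₀ᵀ * F₀ = 1)
    (hmax : ∀ F : Matrix m n ℝ, Fᵀ * F = 1 → trace (Fᵀ * B) ≤ trace (F₀ᵀ * B)) :
    F₀ * (F₀ᵀ * B) = B := by
  set R := B - F₀ * (F₀ᵀ * B)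
  have hRcol : ∀ j, Rᵀ j = 0 := by
    intro j
    by_contra hj
    have hF₀R : F₀ᵀ *ᵥ Rᵀ j = 0 :=
      funext fun p => congrFun (congrFun (transpose_mul_sub_mul_transpose_mul_eq_zero hF₀ B) p) j
    have hRB : Rᵀ j ⬝ᵥ Bᵀ j = Rᵀ j ⬝ᵥ Rᵀ j :=
      congrFun (congrFun (transpose_sub_mul_transpose_mul_mul_eq hF₀ B) j) j
    obtain ⟨F, hF, hlt⟩ := exists_trace_transpose_mul_gt hF₀ B j hF₀R hRB hj
    exact (hmax F hF).not_gt hlt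
  have hR : R = 0 := by
    ext i j
    exact congrFun (hRcol j) i
  exact (sub_eq_zero.mp hR).symm

end Matrix

/-- Lemma 3: a maximizer of the linear alignment `Tr(Fᵀ B)` over matrices with
orthonormal columns also maximizes the quadratic objective `Tr(Fᵀ B Bᵀ F)`. -/
theorem maximizer_linear_is_maximizer_quadratic
    (n k : ℕ) (B : Matrix (Fin n) (Fin k) ℝ)
    (F₀ : Matrix (Fin n) (Fin k) ℝ) (hF₀ : F₀ᵀ * F₀ = 1)
    (hmax : ∀ F : Matrix (Fin n) (Fin k) ℝ, Fᵀ * F = 1 →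
      Matrix.trace (Fᵀ * B) ≤ Matrix.trace (F₀ᵀ * B)) :
    ∀ F : Matrix (Fin n) (Fin k) ℝ, Fᵀ * F = 1 →
      Matrix.trace (Fᵀ * B * Bᵀ * F) ≤ Matrix.trace (F₀ᵀ * B * Bᵀ * F₀) := by
  intro F hF
  have hB : F₀ * (F₀ᵀ * B) = B := mul_transpose_mul_eq_self_of_forall_trace_le hF₀ hmax
  calc trace (Fᵀ * B * Bᵀ * F) ≤ trace (Bᵀ * B) := trace_transpose_mul_mul_transpose_mul_le hF B
    _ = trace (F₀ᵀ * B * Bᵀ * F₀) := by rw [trace_transpose_mul_mul_transpose_mul, hB]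
end
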